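/- arXiv:2103.15789 — 3 statements merged into one kernel-verified Lean document; each statement's English description precedes it below -/
import Mathlib

section
/- Let a, b, c ∈ ℝ, A = [[a,c],[b,a]], and write M(t) = exp(tA) with entries m_{ij}(t). Then for all t ∈ ℝ: (i) m₂₂(t) = m₁₁(t) and b·m₁₂(t) = c·m₂₁(t); (ii) det M(t) = e^{2at}; (iii) m₁₁(−t) = m₂₂(−t) = e^{−2at}·m₁₁(t), m₂₁(−t) = −e^{−2at}·m₂₁(t), and m₁₂(−t) = −e^{−2at}·m₁₂(t). -/
/-- `Mexp A t = exp (t A)`, the matrix exponential. -/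
noncomputable def Mexp (A : Matrix (Fin 2) (Fin 2) ℝ) (t : ℝ) : Matrix (Fin 2) (Fin 2) ℝ :=
  NormedSpace.exp (t • A)

/-!
On `2 × 2` matrices the adjugate is linear, `adj X = tr X • 1 - X`, and it is the
anti-automorphism `M ↦ Q Mᵀ Q⁻¹` with `Q = !![0, 1; -1, 0]`, so it commutes with `exp`. Hence
`adj (exp X) = exp (tr X • 1 - X) = e^{tr X} exp (-X)`, which gives `det (exp X) = e^{tr X}`
and expresses `exp (-tA)` through the entries of `exp (tA)`. For `A = !![a, c; b, a]`, the
anti-automorphism `M ↦ P Mᵀ P` swapping the diagonal entries fixes `A`, hence `exp (tA)`; and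
the `(0, 0)` entry of `A * exp (tA) = exp (tA) * A` reads `c m₁₀ = b m₀₁`.
-/

open NormedSpace

namespace Matrix

section CommRing

variable {R : Type*} [CommRing R]

theorem adjugate_fin_two_eq_conj_transpose (M : Matrix (Fin 2) (Fin 2) R) :
    adjugate M = !![0, 1; -1, 0] * Mᵀ * !![0, -1; 1, 0] := by
  rw [adjugate_fin_two]
  ext i j
  fin_cases i <;> fin_cases j <;> simp [mul_apply, vecMul, dotProduct, Fin.sum_univ_two]

theorem swap_conj_transpose_fin_two (M : Matrix (Fin 2) (Fin 2) R) :
    !![0, 1; 1, 0] * Mᵀ * !![0, 1; 1, 0] = !![M 1 1, M 0 1; M 1 0, M 0 0] := by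
  ext i j
  fin_cases i <;> fin_cases j <;> simp [mul_apply, vecMul, dotProduct, Fin.sum_univ_two]

theorem adjugate_fin_two_eq_trace_smul_one_sub (M : Matrix (Fin 2) (Fin 2) R) :
    adjugate M = trace M • 1 - M := by
  rw [adjugate_fin_two]
  ext i j
  fin_cases i <;> fin_cases j <;> simp [trace_fin_two]

theorem apply_zero_one_mul_apply_one_zero_of_commute {A M : Matrix (Fin 2) (Fin 2) R}
    (h : Commute A M) : A 0 1 * M 1 0 = M 0 1 * A 1 0 := by
  have h00 := congrFun₂ h.eq 0 0
  simp only [mul_apply, Fin.sum_univ_two] at h00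
  linear_combination h00

end CommRing

section Normed

variable {𝔸 : Type*} [NormedCommRing 𝔸] [NormedAlgebra ℚ 𝔸] [CompleteSpace 𝔸]

theorem exp_units_conj_transpose {m : Type*} [Fintype m] [DecidableEq m]
    (U : (Matrix m m 𝔸)ˣ) (X : Matrix m m 𝔸) :
    exp (U * Xᵀ * U⁻¹) = U * (exp X)ᵀ * U⁻¹ := by
  rw [exp_units_conj, exp_transpose]

theorem exp_adjugate_fin_two (X : Matrix (Fin 2) (Fin 2) 𝔸) :
    exp (adjugate X) = adjugate (exp X) := by
  let Q : (Matrix (Fin 2) (Fin 2) 𝔸)ˣ :=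
    ⟨!![0, 1; -1, 0], !![0, -1; 1, 0], by simp [one_fin_two], by simp [one_fin_two]⟩
  rw [adjugate_fin_two_eq_conj_transpose, adjugate_fin_two_eq_conj_transpose]
  exact exp_units_conj_transpose Q X

theorem exp_swap_fin_two (X : Matrix (Fin 2) (Fin 2) 𝔸) :
    exp !![X 1 1, X 0 1; X 1 0, X 0 0] = !![exp X 1 1, exp X 0 1; exp X 1 0, exp X 0 0] := by
  let P : (Matrix (Fin 2) (Fin 2) 𝔸)ˣ :=
    ⟨!![0, 1; 1, 0], !![0, 1; 1, 0], by simp [one_fin_two], by simp [one_fin_two]⟩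
  rw [← swap_conj_transpose_fin_two, ← swap_conj_transpose_fin_two]
  exact exp_units_conj_transpose P X

theorem exp_apply_one_one_fin_two {X : Matrix (Fin 2) (Fin 2) 𝔸} (hX : X 1 1 = X 0 0) :
    exp X 1 1 = exp X 0 0 := by
  have hswap : !![X 1 1, X 0 1; X 1 0, X 0 0] = X := by
    ext i j
    fin_cases i <;> fin_cases j <;> simp [hX]
  simpa [hswap] using (congrFun₂ (exp_swap_fin_two X) 0 0).symm

end Normed

section Real

theorem exp_smul_one {m : Type*} [Fintype m] [DecidableEq m] (r : ℝ) :
    exp (r • (1 : Matrix m m ℝ)) = Real.exp r • 1 := by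
  rw [smul_one_eq_diagonal, exp_diagonal, smul_one_eq_diagonal]
  congr 1
  funext i
  simp [Real.exp_eq_exp_ℝ]

theorem adjugate_exp_fin_two (X : Matrix (Fin 2) (Fin 2) ℝ) :
    adjugate (exp X) = Real.exp (trace X) • exp (-X) := by
  have hcomm : Commute (trace X • (1 : Matrix (Fin 2) (Fin 2) ℝ)) (-X) :=
    (Commute.one_left _).smul_left _ |>.neg_right
  rw [← exp_adjugate_fin_two, adjugate_fin_two_eq_trace_smul_one_sub, sub_eq_add_neg,
    exp_add_of_commute _ _ hcomm, exp_smul_one, smul_one_mul]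

theorem det_exp_fin_two (X : Matrix (Fin 2) (Fin 2) ℝ) :
    (exp X).det = Real.exp (trace X) := by
  have h : (exp X).det • (1 : Matrix (Fin 2) (Fin 2) ℝ) = Real.exp (trace X) • 1 := by
    rw [← mul_adjugate, adjugate_exp_fin_two, mul_smul_comm, ← exp_add_of_commute _ _
      (Commute.neg_right (Commute.refl X)), add_neg_cancel, exp_zero]
  simpa using congrFun₂ h 0 0

end Real

end Matrix

open Matrix

/-- Entry identities for `M(t) = exp(tA)` with `A = [[a,c],[b,a]]`:
(i) `m₂₂(t) = m₁₁(t)` and `b m₁₂(t) = c m₂₁(t)`; (ii) `det M(t) = e^{2at}`;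
(iii) `m₁₁(−t) = m₂₂(−t) = e^{−2at} m₁₁(t)`, `m₂₁(−t) = −e^{−2at} m₂₁(t)`,
`m₁₂(−t) = −e^{−2at} m₁₂(t)`. -/
theorem Mexp_entries (a b c : ℝ) :
    ∀ t : ℝ,
      Mexp !![a, c; b, a] t 1 1 = Mexp !![a, c; b, a] t 0 0 ∧
      b * Mexp !![a, c; b, a] t 0 1 = c * Mexp !![a, c; b, a] t 1 0 ∧
      (Mexp !![a, c; b, a] t).det = Real.exp (2 * a * t) ∧
      Mexp !![a, c; b, a] (-t) 0 0 = Real.exp (-2 * a * t) * Mexp !![a, c; b, a] t 0 0 ∧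
      Mexp !![a, c; b, a] (-t) 1 1 = Real.exp (-2 * a * t) * Mexp !![a, c; b, a] t 0 0 ∧
      Mexp !![a, c; b, a] (-t) 1 0 = -(Real.exp (-2 * a * t) * Mexp !![a, c; b, a] t 1 0) ∧
      Mexp !![a, c; b, a] (-t) 0 1 = -(Real.exp (-2 * a * t) * Mexp !![a, c; b, a] t 0 1) := by
  intro t
  set A : Matrix (Fin 2) (Fin 2) ℝ := !![a, c; b, a]
  have hdiag : Mexp A t 1 1 = Mexp A t 0 0 := exp_apply_one_one_fin_two (by simp [A])
  have hoff : b * Mexp A t 0 1 = c * Mexp A t 1 0 := by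
    have h : c * Mexp A t 1 0 = Mexp A t 0 1 * b :=
      apply_zero_one_mul_apply_one_zero_of_commute ((Commute.refl A).smul_right t).exp_right
    linear_combination -h
  have htrace : trace (t • A) = 2 * a * t := by
    rw [trace_smul, trace_fin_two_of, smul_eq_mul]; ring
  have hneg : Mexp A (-t) = Real.exp (-2 * a * t) • adjugate (Mexp A t) := by
    rw [Mexp, Mexp, adjugate_exp_fin_two, htrace, smul_smul, ← Real.exp_add, neg_smul]
    simp
  refine ⟨hdiag, hoff, (det_exp_fin_two _).trans (congrArg Real.exp htrace), ?_⟩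
  simp [hneg, adjugate_fin_two, hdiag]
end

section
/- For i = 1, 2, let a_i > 0, b_i > 0, c_i ∈ ℝ and A_i = [[a_i,c_i],[b_i,a_i]]. Then there exists a Lie algebra isomorphism between 𝔤(A₁) and 𝔤(A₂) if and only if b₁c₁/a₁² = b₂c₂/a₂². -/
/-! In coordinates, `𝔤(A)` is the semidirect product `ℝ ⋉_A ℝ²`, and `ad L(x)` has trace
`x₁ tr A` and Killing form value `x₁² tr(A²)`. Both are preserved by isomorphisms while `x₁` only
rescales, so `tr(A²) / (tr A)² = 1/2 + bc/(2a²)` is an isomorphism invariant. Conversely,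
conjugation by `diag(P, 1)` maps `𝔤(A)` onto `𝔤(PAP⁻¹)`, and `𝔤(sA) = 𝔤(A)` for `s ≠ 0`; when the
two quotients agree, `P = diag(1, r)` conjugates `A₁` to `(a₁/a₂) A₂` for a suitable `r`. -/

attribute [local instance 100] LieRing.ofAssociativeRing

def Lmat (A : Matrix (Fin 2) (Fin 2) ℝ) (x₁ x₂ x₃ : ℝ) : Matrix (Fin 3) (Fin 3) ℝ :=
  !![x₁ * A 0 0, x₁ * A 0 1, x₂;
     x₁ * A 1 0, x₁ * A 1 1, x₃;
     0,          0,          0]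

/-- The Lie subalgebra `𝔤(A) = { L(x) : x ∈ ℝ³ }` of the 3×3 real matrices with the
commutator bracket. -/
def gA (A : Matrix (Fin 2) (Fin 2) ℝ) : LieSubalgebra ℝ (Matrix (Fin 3) (Fin 3) ℝ) where
  carrier := { M | ∃ x₁ x₂ x₃ : ℝ, M = Lmat A x₁ x₂ x₃ }
  add_mem' := by
    rintro M N ⟨x₁, x₂, x₃, rfl⟩ ⟨y₁, y₂, y₃, rfl⟩
    refine ⟨x₁ + y₁, x₂ + y₂, x₃ + y₃, ?_⟩
    ext i j
    fin_cases i <;> fin_cases j <;>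
      simp [Lmat, Matrix.vecHead, Matrix.vecTail] <;> ring
  zero_mem' := by
    refine ⟨0, 0, 0, ?_⟩
    ext i j
    fin_cases i <;> fin_cases j <;>
      simp [Lmat, Matrix.vecHead, Matrix.vecTail]
  smul_mem' := by
    rintro r M ⟨x₁, x₂, x₃, rfl⟩
    refine ⟨r * x₁, r * x₂, r * x₃, ?_⟩
    ext i j
    fin_cases i <;> fin_cases j <;>
      simp [Lmat, Matrix.vecHead, Matrix.vecTail] <;> ring
  lie_mem' := by
    rintro M N ⟨x₁, x₂, x₃, rfl⟩ ⟨y₁, y₂, y₃, rfl⟩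
    refine ⟨0, A 0 0 * (x₁ * y₂ - y₁ * x₂) + A 0 1 * (x₁ * y₃ - y₁ * x₃),
      A 1 0 * (x₁ * y₂ - y₁ * x₂) + A 1 1 * (x₁ * y₃ - y₁ * x₃), ?_⟩
    show Lmat A x₁ x₂ x₃ * Lmat A y₁ y₂ y₃ - Lmat A y₁ y₂ y₃ * Lmat A x₁ x₂ x₃ = _
    rw [Lmat, Lmat, Lmat, Matrix.mul_fin_three, Matrix.mul_fin_three]
    ext i j
    fin_cases i <;> fin_cases j <;>
      simp [Matrix.vecHead, Matrix.vecTail] <;> ring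

lemma LieAlgebra.trace_ad_of_equiv {R L L' : Type*} [CommRing R] [LieRing L] [LieAlgebra R L]
    [LieRing L'] [LieAlgebra R L'] (e : L ≃ₗ⁅R⁆ L') (x : L) :
    LinearMap.trace R L' (LieAlgebra.ad R L' (e x)) =
      LinearMap.trace R L (LieAlgebra.ad R L x) := by
  rw [← LieAlgebra.conj_ad_apply, LinearMap.trace_conj']

namespace gA

variable {A A₁ A₂ : Matrix (Fin 2) (Fin 2) ℝ}

def mkₗ (A : Matrix (Fin 2) (Fin 2) ℝ) : (Fin 3 → ℝ) →ₗ[ℝ] gA A where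
  toFun v := ⟨Lmat A (v 0) (v 1) (v 2), v 0, v 1, v 2, rfl⟩
  map_add' v w := by
    ext i j
    fin_cases i <;> fin_cases j <;> simp [Lmat] <;> ring
  map_smul' r v := by
    ext i j
    fin_cases i <;> fin_cases j <;> simp [Lmat] <;> ring

@[simp]
lemma coe_mkₗ (v : Fin 3 → ℝ) : (mkₗ A v : Matrix (Fin 3) (Fin 3) ℝ) = Lmat A (v 0) (v 1) (v 2) :=
  rfl

lemma mkₗ_surjective : Function.Surjective (mkₗ A) := by
  rintro ⟨_, x₁, x₂, x₃, rfl⟩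
  exact ⟨![x₁, x₂, x₃], rfl⟩

lemma mkₗ_injective (hA : A ≠ 0) : Function.Injective (mkₗ A) := by
  rw [← LinearMap.ker_eq_bot, LinearMap.ker_eq_bot']
  intro v hv
  have hL : Lmat A (v 0) (v 1) (v 2) = 0 := congrArg Subtype.val hv
  have h₀ : v 0 = 0 := by
    by_contra h₀
    refine hA (Matrix.ext fun i j => ?_)
    have hij := congrFun₂ hL i.castSucc j.castSucc
    fin_cases i <;> fin_cases j <;> simpa [Lmat, h₀] using hij
  funext i
  fin_cases i
  · exact h₀
  · simpa [Lmat] using congrFun₂ hL 0 2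
  · simpa [Lmat] using congrFun₂ hL 1 2

noncomputable def linearEquiv (hA : A ≠ 0) : (Fin 3 → ℝ) ≃ₗ[ℝ] gA A :=
  LinearEquiv.ofBijective (mkₗ A) ⟨mkₗ_injective hA, mkₗ_surjective⟩

lemma lie_mkₗ (v w : Fin 3 → ℝ) :
    ⁅mkₗ A v, mkₗ A w⁆ = mkₗ A
      ![0, A 0 0 * (v 0 * w 1 - w 0 * v 1) + A 0 1 * (v 0 * w 2 - w 0 * v 2),
        A 1 0 * (v 0 * w 1 - w 0 * v 1) + A 1 1 * (v 0 * w 2 - w 0 * v 2)] := by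
  apply Subtype.ext
  rw [LieSubalgebra.coe_bracket, Ring.lie_def, coe_mkₗ, coe_mkₗ, coe_mkₗ, Lmat, Lmat,
    Matrix.mul_fin_three, Matrix.mul_fin_three]
  ext i j
  fin_cases i <;> fin_cases j <;> simp [Lmat] <;> ring

def adMatrix (A : Matrix (Fin 2) (Fin 2) ℝ) (v : Fin 3 → ℝ) : Matrix (Fin 3) (Fin 3) ℝ :=
  !![0, 0, 0;
     -(A 0 0 * v 1 + A 0 1 * v 2), v 0 * A 0 0, v 0 * A 0 1;
     -(A 1 0 * v 1 + A 1 1 * v 2), v 0 * A 1 0, v 0 * A 1 1]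

lemma ad_mkₗ_comp_mkₗ (v : Fin 3 → ℝ) :
    LieAlgebra.ad ℝ (gA A) (mkₗ A v) ∘ₗ mkₗ A = mkₗ A ∘ₗ Matrix.toLin' (adMatrix A v) := by
  refine LinearMap.ext fun w => ?_
  rw [LinearMap.comp_apply, LieAlgebra.ad_apply, lie_mkₗ, LinearMap.comp_apply]
  congr 1
  funext i
  fin_cases i <;> simp [adMatrix, Matrix.mulVec, dotProduct, Fin.sum_univ_three] <;> ring

lemma ad_mkₗ (hA : A ≠ 0) (v : Fin 3 → ℝ) :
    LieAlgebra.ad ℝ (gA A) (mkₗ A v) = (linearEquiv hA).conj (Matrix.toLin' (adMatrix A v)) := by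
  rw [LinearEquiv.conj_apply, LinearEquiv.eq_comp_toLinearMap_symm]
  exact ad_mkₗ_comp_mkₗ v

lemma trace_ad_mkₗ (hA : A ≠ 0) (v : Fin 3 → ℝ) :
    LinearMap.trace ℝ (gA A) (LieAlgebra.ad ℝ (gA A) (mkₗ A v)) = A.trace * v 0 := by
  rw [ad_mkₗ hA, LinearMap.trace_conj', Matrix.trace_toLin'_eq, Matrix.trace_fin_three,
    Matrix.trace_fin_two]
  simp only [adMatrix, Matrix.of_apply, Matrix.cons_val, Matrix.cons_val_zero, Matrix.cons_val_one]
  ring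

lemma killingForm_mkₗ (hA : A ≠ 0) (v : Fin 3 → ℝ) :
    killingForm ℝ (gA A) (mkₗ A v) (mkₗ A v) = (A * A).trace * v 0 ^ 2 := by
  rw [killingForm_apply_apply, ad_mkₗ hA, ← LinearEquiv.conj_comp, LinearMap.trace_conj',
    ← Matrix.toLin'_mul, Matrix.trace_toLin'_eq]
  simp only [Matrix.trace_fin_three, Matrix.trace_fin_two, Matrix.mul_apply, Fin.sum_univ_three,
    Fin.sum_univ_two, adMatrix, Matrix.of_apply, Matrix.cons_val, Matrix.cons_val_zero,
    Matrix.cons_val_one]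
  ring

lemma trace_mul_self_mul_trace_sq_eq_of_lieEquiv (hA₁ : A₁ ≠ 0) (hA₂ : A₂ ≠ 0)
    (e : gA A₁ ≃ₗ⁅ℝ⁆ gA A₂) :
    (A₁ * A₁).trace * A₂.trace ^ 2 = (A₂ * A₂).trace * A₁.trace ^ 2 := by
  set x := mkₗ A₁ (Pi.single 0 1)
  obtain ⟨w, hw⟩ := mkₗ_surjective (e x)
  have htrace := LieAlgebra.trace_ad_of_equiv e x
  have hkilling := LieAlgebra.killingForm_of_equiv_apply e x x
  rw [← hw, trace_ad_mkₗ hA₂, trace_ad_mkₗ hA₁] at htrace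
  rw [← hw, killingForm_mkₗ hA₂, killingForm_mkₗ hA₁] at hkilling
  simp only [Pi.single_eq_same, mul_one, one_pow] at htrace hkilling
  rw [← htrace, ← hkilling]
  ring

def blockDiagOne (P : Matrix (Fin 2) (Fin 2) ℝ) : Matrix (Fin 3) (Fin 3) ℝ :=
  !![P 0 0, P 0 1, 0;
     P 1 0, P 1 1, 0;
     0,     0,     1]

lemma blockDiagOne_mul (P Q : Matrix (Fin 2) (Fin 2) ℝ) :
    blockDiagOne P * blockDiagOne Q = blockDiagOne (P * Q) := by
  ext i j
  fin_cases i <;> fin_cases j <;>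
    simp [blockDiagOne, Matrix.mul_apply, Fin.sum_univ_three, Fin.sum_univ_two]

lemma blockDiagOne_one : blockDiagOne 1 = 1 := by
  ext i j
  fin_cases i <;> fin_cases j <;> simp [blockDiagOne]

instance (P : Matrix (Fin 2) (Fin 2) ℝ) [Invertible P] : Invertible (blockDiagOne P) :=
  invertibleOfLeftInverse _ (blockDiagOne ⅟P) <| by
    rw [blockDiagOne_mul, invOf_mul_self, blockDiagOne_one]

lemma inv_blockDiagOne (P : Matrix (Fin 2) (Fin 2) ℝ) [Invertible P] :
    (blockDiagOne P)⁻¹ = blockDiagOne P⁻¹ :=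
  Matrix.inv_eq_left_inv (by rw [blockDiagOne_mul, Matrix.inv_mul_of_invertible, blockDiagOne_one])

lemma blockDiagOne_mul_Lmat_mul (P Q : Matrix (Fin 2) (Fin 2) ℝ) (x₁ x₂ x₃ : ℝ) :
    blockDiagOne P * Lmat A x₁ x₂ x₃ * blockDiagOne Q =
      Lmat (P * A * Q) x₁ (P 0 0 * x₂ + P 0 1 * x₃) (P 1 0 * x₂ + P 1 1 * x₃) := by
  ext i j
  fin_cases i <;> fin_cases j <;>
    simp [blockDiagOne, Lmat, Matrix.mul_apply, Fin.sum_univ_three, Fin.sum_univ_two] <;> ring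

lemma blockDiagOne_mul_mul_mem {M : Matrix (Fin 3) (Fin 3) ℝ} (hM : M ∈ gA A)
    (P Q : Matrix (Fin 2) (Fin 2) ℝ) : blockDiagOne P * M * blockDiagOne Q ∈ gA (P * A * Q) := by
  obtain ⟨x₁, x₂, x₃, rfl⟩ := hM
  exact ⟨_, _, _, blockDiagOne_mul_Lmat_mul P Q x₁ x₂ x₃⟩

lemma map_lieConj_blockDiagOne (P : Matrix (Fin 2) (Fin 2) ℝ) [Invertible P] :
    (gA A).map (Matrix.lieConj (blockDiagOne P) inferInstance).toLieHom = gA (P * A * P⁻¹) := by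
  ext M
  simp only [LieSubalgebra.mem_map, LieEquiv.coe_toLieHom, Matrix.lieConj_apply, inv_blockDiagOne]
  constructor
  · rintro ⟨N, hN, rfl⟩
    exact blockDiagOne_mul_mul_mem hN P P⁻¹
  · intro hM
    refine ⟨blockDiagOne P⁻¹ * M * blockDiagOne P, ?_, ?_⟩
    · simpa [Matrix.mul_assoc] using blockDiagOne_mul_mul_mem hM P⁻¹ P
    · simp only [← Matrix.mul_assoc, blockDiagOne_mul, Matrix.mul_inv_of_invertible,
        blockDiagOne_one, Matrix.one_mul]
      rw [Matrix.mul_assoc, blockDiagOne_mul, Matrix.mul_inv_of_invertible, blockDiagOne_one,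
        Matrix.mul_one]

lemma Lmat_smul (s : ℝ) (x₁ x₂ x₃ : ℝ) : Lmat (s • A) x₁ x₂ x₃ = Lmat A (s * x₁) x₂ x₃ := by
  ext i j
  fin_cases i <;> fin_cases j <;> simp [Lmat] <;> ring

lemma gA_smul {s : ℝ} (hs : s ≠ 0) : gA (s • A) = gA A := by
  ext M
  constructor
  · rintro ⟨x₁, x₂, x₃, rfl⟩
    exact ⟨s * x₁, x₂, x₃, Lmat_smul s x₁ x₂ x₃⟩
  · rintro ⟨x₁, x₂, x₃, rfl⟩
    refine ⟨x₁ / s, x₂, x₃, ?_⟩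
    rw [Lmat_smul, mul_div_cancel₀ x₁ hs]

lemma nonempty_lieEquiv_of_conj (P : Matrix (Fin 2) (Fin 2) ℝ) [Invertible P] {s : ℝ} (hs : s ≠ 0)
    (h : P * A₁ * P⁻¹ = s • A₂) : Nonempty (gA A₁ ≃ₗ⁅ℝ⁆ gA A₂) :=
  ⟨(Matrix.lieConj (blockDiagOne P) inferInstance).ofSubalgebras _ _ <| by
    rw [map_lieConj_blockDiagOne, h, gA_smul hs]⟩

end gA

open gA in
/-- For `aᵢ > 0`, `bᵢ > 0`, `cᵢ ∈ ℝ` and `Aᵢ = [[aᵢ,cᵢ],[bᵢ,aᵢ]]`, the Lie algebras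
`𝔤(A₁)` and `𝔤(A₂)` are isomorphic if and only if `b₁c₁/a₁² = b₂c₂/a₂²`. -/
theorem gA_isomorphic_iff (a₁ b₁ c₁ a₂ b₂ c₂ : ℝ)
    (ha₁ : 0 < a₁) (hb₁ : 0 < b₁) (ha₂ : 0 < a₂) (hb₂ : 0 < b₂) :
    Nonempty (gA !![a₁, c₁; b₁, a₁] ≃ₗ⁅ℝ⁆ gA !![a₂, c₂; b₂, a₂]) ↔
      b₁ * c₁ / a₁ ^ 2 = b₂ * c₂ / a₂ ^ 2 := by
  have hA_ne {a b c : ℝ} (hb : 0 < b) : !![a, c; b, a] ≠ 0 := fun h =>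
    hb.ne' (by simpa using congrFun₂ h 1 0)
  rw [div_eq_div_iff (by positivity) (by positivity)]
  constructor
  · rintro ⟨e⟩
    have h := trace_mul_self_mul_trace_sq_eq_of_lieEquiv (hA_ne hb₁) (hA_ne hb₂) e
    simp only [Matrix.mul_fin_two, Matrix.trace_fin_two_of] at h
    linear_combination h / 8
  · intro h
    set s := a₁ / a₂ with hs
    set r := s * b₂ / b₁ with hr_def
    have hr : r ≠ 0 := by positivity
    set P : Matrix (Fin 2) (Fin 2) ℝ := !![1, 0; 0, r]
    have hP : !![1, 0; 0, r⁻¹] * P = 1 := by simp [P, Matrix.one_fin_two, hr]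
    let := invertibleOfLeftInverse P _ hP
    refine nonempty_lieEquiv_of_conj P (s := s) (by positivity) ?_
    have ha : s * a₂ = a₁ := div_mul_cancel₀ a₁ ha₂.ne'
    have hb : r * b₁ = s * b₂ := div_mul_cancel₀ _ hb₁.ne'
    have hc : c₁ * r⁻¹ = s * c₂ := by
      rw [hr_def, hs]
      field_simp
      linear_combination h
    rw [Matrix.inv_eq_left_inv hP, Matrix.eta_fin_two (s • _)]
    simp [P, ha, hb, hc, mul_comm r a₁, hr]
end

section
/- Let a, b, c be real numbers with a ≥ 0 and b ≥ |c|, and define R₁₁ = −2a² − (b+c)²/2, R₂₂ = −2a² − ((b+c)/2)·√(4a² + (b−c)²), R₃₃ = −2a² + ((b+c)/2)·√(4a² + (b−c)²). Then: (i) if b + c = 0 then R₁₁ = R₂₂ = R₃₃ = −2a²; (ii) if b + c ≠ 0 then R₁₁ = R₂₂ if and only if a² = bc; (iii) if b + c ≠ 0 then R₂₂ = R₃₃ if and only if a = 0 and b = c; (iv) if b + c ≠ 0 then R₁₁ ≠ R₃₃. -/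
/-!
Write `s = √(4a² + (b − c)²)`. The identity `(b + c)² − s² = 4(bc − a²)` shows that, for
`b + c ≥ 0`, `s = b + c` exactly when `a² = bc`; and `s = 0` exactly when `a = 0` and `b = c`.
Since `b ≥ |c|` gives `b + c > 0` once `b + c ≠ 0`, the three coincidences among
`R₁₁ = −2a² − (b+c)²/2` and `R₂₂, R₃₃ = −2a² ∓ (b+c)s/2` reduce to these two facts, and
`R₁₁ < −2a² ≤ R₃₃`.
-/

lemma sqrt_four_sq_add_sq_sub_eq_add_iff {a b c : ℝ} (hbc : 0 ≤ b + c) :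
    Real.sqrt (4 * a ^ 2 + (b - c) ^ 2) = b + c ↔ a ^ 2 = b * c := by
  rw [Real.sqrt_eq_iff_eq_sq (by positivity) hbc]
  constructor <;> intro h <;> linarith

lemma sqrt_four_sq_add_sq_sub_eq_zero_iff {a b c : ℝ} :
    Real.sqrt (4 * a ^ 2 + (b - c) ^ 2) = 0 ↔ a = 0 ∧ b = c := by
  rw [Real.sqrt_eq_zero']
  constructor
  · intro h
    have ha : a ^ 2 = 0 := by nlinarith [sq_nonneg a, sq_nonneg (b - c)]
    have hbc : (b - c) ^ 2 = 0 := by nlinarith [sq_nonneg a, sq_nonneg (b - c)]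
    exact ⟨pow_eq_zero_iff two_ne_zero |>.mp ha,
      sub_eq_zero.mp (pow_eq_zero_iff two_ne_zero |>.mp hbc)⟩
  · rintro ⟨rfl, rfl⟩
    simp

lemma sq_div_two_eq_div_two_mul_iff {x s : ℝ} (hx : x ≠ 0) : x ^ 2 / 2 = x / 2 * s ↔ x = s := by
  rw [show x ^ 2 / 2 = x / 2 * x by ring, mul_right_inj' (div_ne_zero hx two_ne_zero)]

theorem ricci_diagonal_entries_general (a b c : ℝ) (hbc : |c| ≤ b) :
    ((b + c = 0 →
        -2 * a ^ 2 - (b + c) ^ 2 / 2 = -2 * a ^ 2 ∧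
        -2 * a ^ 2 - (b + c) / 2 * Real.sqrt (4 * a ^ 2 + (b - c) ^ 2) = -2 * a ^ 2 ∧
        -2 * a ^ 2 + (b + c) / 2 * Real.sqrt (4 * a ^ 2 + (b - c) ^ 2) = -2 * a ^ 2) ∧
     (b + c ≠ 0 →
        (-2 * a ^ 2 - (b + c) ^ 2 / 2 =
            -2 * a ^ 2 - (b + c) / 2 * Real.sqrt (4 * a ^ 2 + (b - c) ^ 2) ↔
          a ^ 2 = b * c)) ∧
     (b + c ≠ 0 →
        (-2 * a ^ 2 - (b + c) / 2 * Real.sqrt (4 * a ^ 2 + (b - c) ^ 2) =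
            -2 * a ^ 2 + (b + c) / 2 * Real.sqrt (4 * a ^ 2 + (b - c) ^ 2) ↔
          a = 0 ∧ b = c)) ∧
     (b + c ≠ 0 →
        -2 * a ^ 2 - (b + c) ^ 2 / 2 ≠
          -2 * a ^ 2 + (b + c) / 2 * Real.sqrt (4 * a ^ 2 + (b - c) ^ 2))) := by
  have hsum : 0 ≤ b + c := by linarith [neg_abs_le c]
  refine ⟨fun h => by simp [h], fun h => ?_, fun h => ?_, fun h => ?_⟩
  · rw [sub_right_inj, sq_div_two_eq_div_two_mul_iff h, eq_comm,
      sqrt_four_sq_add_sq_sub_eq_add_iff hsum]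
  · rw [sub_eq_add_neg, add_right_inj, neg_eq_self, mul_eq_zero,
      or_iff_right (div_ne_zero h two_ne_zero), sqrt_four_sq_add_sq_sub_eq_zero_iff]
  · have hpos : 0 < b + c := hsum.lt_of_ne' h
    have hR₃₃ : 0 ≤ (b + c) / 2 * Real.sqrt (4 * a ^ 2 + (b - c) ^ 2) := by positivity
    have hR₁₁ : 0 < (b + c) ^ 2 / 2 := by positivity
    linarith

/-- Coincidences among the diagonal entries
`R₁₁ = −2a² − (b+c)²/2`, `R₂₂ = −2a² − ((b+c)/2)√(4a²+(b−c)²)`,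
`R₃₃ = −2a² + ((b+c)/2)√(4a²+(b−c)²)` of the diagonalized Ricci matrix. -/
theorem ricci_diagonal_entries (a b c : ℝ) (ha : 0 ≤ a) (hbc : |c| ≤ b) :
    ((b + c = 0 →
        -2 * a ^ 2 - (b + c) ^ 2 / 2 = -2 * a ^ 2 ∧
        -2 * a ^ 2 - (b + c) / 2 * Real.sqrt (4 * a ^ 2 + (b - c) ^ 2) = -2 * a ^ 2 ∧
        -2 * a ^ 2 + (b + c) / 2 * Real.sqrt (4 * a ^ 2 + (b - c) ^ 2) = -2 * a ^ 2) ∧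
     (b + c ≠ 0 →
        (-2 * a ^ 2 - (b + c) ^ 2 / 2 =
            -2 * a ^ 2 - (b + c) / 2 * Real.sqrt (4 * a ^ 2 + (b - c) ^ 2) ↔
          a ^ 2 = b * c)) ∧
     (b + c ≠ 0 →
        (-2 * a ^ 2 - (b + c) / 2 * Real.sqrt (4 * a ^ 2 + (b - c) ^ 2) =
            -2 * a ^ 2 + (b + c) / 2 * Real.sqrt (4 * a ^ 2 + (b - c) ^ 2) ↔
          a = 0 ∧ b = c)) ∧
     (b + c ≠ 0 →
        -2 * a ^ 2 - (b + c) ^ 2 / 2 ≠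
          -2 * a ^ 2 + (b + c) / 2 * Real.sqrt (4 * a ^ 2 + (b - c) ^ 2))) :=
  ricci_diagonal_entries_general a b c hbc
end
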